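/- Let d, e be metrics on ℕ, let (M_d, (u_i)) and (M_e, (v_j)) be completions of (ℕ,d) and (ℕ,e), and let 0 < ε < 1/4. Suppose there is a correspondence ℛ between (ℕ × ℤ) ∪ {♣} and itself such that |d̃(a,a') − ẽ(b,b')| < 2ε whenever a ℛ b and a' ℛ b'. Then there exists a bijection T : M_d → M_e with Lip(T) ≤ 1 + 24ε and Lip(T⁻¹) ≤ 1 + 24ε. -/
import Mathlib


/- Context: a metric on ℕ is a function d : ℕ × ℕ → ℝ with d(m,n) = 0 iff m = n, symmetry
and the triangle inequality.  A completion of (ℕ,d) is a complete metric space M_d with a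
dense sequence (u i) satisfying dist (u i) (u j) = d i j.  For a metric d on ℕ, d̃ is the
metric on (ℕ × ℤ) ∪ {♣} (modelled by `Option (ℕ × ℤ)`, with `none` = ♣) defined by
d̃((i,k),(j,l)) = |10k − 10l| + min{1, 2^min(k,l)·d(i,j)}, d̃((i,k),♣) = |10k+4| + 1.
Lip(T) is the optimal Lipschitz constant; a correspondence relates every element on each
side to some element on the other. -/

/-- `d` is a metric on `ℕ`. -/
def IsMetricOnNat (d : ℕ → ℕ → ℝ) : Prop :=
  (∀ m n, d m n = 0 ↔ m = n) ∧ (∀ m n, d m n = d n m) ∧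
    (∀ m n k, d m k ≤ d m n + d n k)

/-- The metric `d̃` on `(ℕ × ℤ) ∪ {♣}`. -/
noncomputable def tildeD (d : ℕ → ℕ → ℝ) : Option (ℕ × ℤ) → Option (ℕ × ℤ) → ℝ
  | some p, some q =>
      |10 * (p.2 : ℝ) - 10 * (q.2 : ℝ)| + min 1 ((2 : ℝ) ^ (min p.2 q.2) * d p.1 q.1)
  | some p, none => |10 * (p.2 : ℝ) + 4| + 1
  | none, some q => |10 * (q.2 : ℝ) + 4| + 1
  | none, none => 0

lemma IsMetricOnNat.nonneg {d : ℕ → ℕ → ℝ} (hd : IsMetricOnNat d) (m n : ℕ) : 0 ≤ d m n := by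
  have h1 : d m m = 0 := (hd.1 m m).mpr rfl
  have h2 := hd.2.2 m n m
  have h3 := hd.2.1 n m
  linarith

lemma tildeD_ss (d : ℕ → ℕ → ℝ) (i j : ℕ) (k l : ℤ) :
    tildeD d (some (i,k)) (some (j,l)) =
      |10 * (k : ℝ) - 10 * (l : ℝ)| + min 1 ((2 : ℝ) ^ (min k l) * d i j) := rfl

lemma tildeD_sn (d : ℕ → ℕ → ℝ) (i : ℕ) (k : ℤ) :
    tildeD d (some (i,k)) none = |10 * (k : ℝ) + 4| + 1 := rfl

lemma tildeD_ns (d : ℕ → ℕ → ℝ) (j : ℕ) (l : ℤ) :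
    tildeD d none (some (j,l)) = |10 * (l : ℝ) + 4| + 1 := rfl

lemma tildeD_nn (d : ℕ → ℕ → ℝ) : tildeD d none none = 0 := rfl

-- integer arithmetic helper : |A|+1 within 1/2 of 10n + t with t ∈ [0,1] is impossible when A = 10m+4
lemma key_arith (m n : ℤ) (hn : 0 ≤ n) (t : ℝ) (ht0 : 0 ≤ t) (ht1 : t ≤ 1)
    (h : |(|10 * (m : ℝ) + 4| + 1) - (10 * n + t)| < 1 / 2) : False := by
  have hc : |10 * (m : ℝ) + 4| = ((|10 * m + 4| : ℤ) : ℝ) := by push_cast; ring_nf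
  rw [hc] at h
  rw [abs_lt] at h
  have h1 : ((|10 * m + 4| : ℤ) : ℝ) - 10 * (n : ℝ) < 1 := by linarith
  have h2 : (-2 : ℝ) < ((|10 * m + 4| : ℤ) : ℝ) - 10 * (n : ℝ) := by linarith
  have h1' : (|10 * m + 4| : ℤ) - 10 * n < 1 := by exact_mod_cast (by push_cast; linarith : ((|10 * m + 4| - 10 * n : ℤ) : ℝ) < 1)
  have h2' : (-2 : ℤ) < (|10 * m + 4| : ℤ) - 10 * n := by exact_mod_cast (by push_cast; linarith : ((-2 : ℤ) : ℝ) < ((|10 * m + 4| - 10 * n : ℤ) : ℝ))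
  rcases abs_choice (10 * m + 4) with hA | hA <;> omega

-- |A|+1 within 1/2 of |B|+1 with A = 10k+4, B = 10l+4 forces k = l
lemma key_arith2 (k l : ℤ) (h : |(|10 * (k : ℝ) + 4| + 1) - (|10 * (l : ℝ) + 4| + 1)| < 1 / 2) :
    k = l := by
  have hc : |10 * (k : ℝ) + 4| = ((|10 * k + 4| : ℤ) : ℝ) := by push_cast; ring_nf
  have hc' : |10 * (l : ℝ) + 4| = ((|10 * l + 4| : ℤ) : ℝ) := by push_cast; ring_nf
  rw [hc, hc', abs_lt] at h
  have h1' : (|10 * k + 4| : ℤ) - |10 * l + 4| < 1 := by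
    exact_mod_cast (by push_cast; linarith : ((|10 * k + 4| - |10 * l + 4| : ℤ) : ℝ) < 1)
  have h2' : (-1 : ℤ) < (|10 * k + 4| : ℤ) - |10 * l + 4| := by
    exact_mod_cast (by push_cast; linarith : ((-1 : ℤ) : ℝ) < ((|10 * k + 4| - |10 * l + 4| : ℤ) : ℝ))
  rcases abs_choice (10 * k + 4) with hA | hA <;> rcases abs_choice (10 * l + 4) with hB | hB <;> omega

section Corr
variable {d e : ℕ → ℕ → ℝ} {ε : ℝ} {R : Option (ℕ × ℤ) → Option (ℕ × ℤ) → Prop}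

/-- ♣ is only related to ♣. -/
lemma club_club (hd : IsMetricOnNat d) (he : IsMetricOnNat e) (hε0 : 0 < ε) (hε : ε < 1/4)
    (hR1 : ∀ a, ∃ b, R a b)
    (hR : ∀ a a' b b', R a b → R a' b' → |tildeD d a a' - tildeD e b b'| < 2 * ε)
    {b : Option (ℕ × ℤ)} (h : R none b) : b = none := by
  rcases b with _ | q
  · rfl
  exfalso
  obtain ⟨b', hb'⟩ := hR1 (some (0, q.2 + 1))
  have h2 := hR _ _ _ _ h hb'
  have hlt : |tildeD d none (some (0, q.2 + 1)) - tildeD e (some q) b'| < 1/2 := lt_trans h2 (by linarith)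
  rw [tildeD_ns] at hlt
  rcases b' with _ | q'
  · rw [tildeD_sn] at hlt
    have := key_arith2 (q.2 + 1) q.2 (by push_cast at hlt ⊢; linarith [hlt])
    omega
  · obtain ⟨j, l⟩ := q
    obtain ⟨j', l'⟩ := q'
    rw [tildeD_ss] at hlt
    -- |10l - 10l'| = 10 * |l - l'|
    have habs : |10 * (l : ℝ) - 10 * (l' : ℝ)| = 10 * ((|l - l'| : ℤ) : ℝ) := by
      push_cast
      rw [show (10:ℝ) * l - 10 * l' = 10 * ((l:ℝ) - l') by ring, abs_mul]
      norm_num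
    rw [habs] at hlt
    refine key_arith (l + 1) |l - l'| (abs_nonneg _) (min 1 ((2:ℝ) ^ (min l l') * e j j'))
      (le_min zero_le_one (mul_nonneg (zpow_nonneg (by norm_num) _) (he.nonneg j j')))
      (min_le_left _ _) ?_
    convert hlt using 3 <;> push_cast <;> ring

/-- no point is related to ♣ (on the right). -/
lemma some_none_false (hd : IsMetricOnNat d) (he : IsMetricOnNat e) (hε0 : 0 < ε) (hε : ε < 1/4)
    (hR1 : ∀ a, ∃ b, R a b)
    (hR : ∀ a a' b b', R a b → R a' b' → |tildeD d a a' - tildeD e b b'| < 2 * ε)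
    {p : ℕ × ℤ} (h : R (some p) none) : False := by
  obtain ⟨b0, hb0⟩ := hR1 none
  have hb0' := club_club hd he hε0 hε hR1 hR hb0
  subst hb0'
  have h2 := hR _ _ _ _ h hb0
  rw [tildeD_sn, tildeD_nn] at h2
  have h3 : |10 * (p.2 : ℝ) + 4| ≥ 4 := by
    have : |10 * (p.2 : ℝ) + 4| = ((|10 * p.2 + 4| : ℤ) : ℝ) := by push_cast; ring_nf
    rw [this]
    have : (4 : ℤ) ≤ |10 * p.2 + 4| := by
      have hnn := abs_nonneg (10 * p.2 + 4)
      rcases abs_choice (10 * p.2 + 4) with hA | hA <;> omega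
    exact_mod_cast this
  rw [sub_zero, abs_of_nonneg (by linarith)] at h2
  linarith

/-- relating (i,k) to (j,l) forces l = k. -/
lemma level_eq (hd : IsMetricOnNat d) (he : IsMetricOnNat e) (hε0 : 0 < ε) (hε : ε < 1/4)
    (hR1 : ∀ a, ∃ b, R a b)
    (hR : ∀ a a' b b', R a b → R a' b' → |tildeD d a a' - tildeD e b b'| < 2 * ε)
    {i j : ℕ} {k l : ℤ} (h : R (some (i,k)) (some (j,l))) : l = k := by
  obtain ⟨b0, hb0⟩ := hR1 none
  have hb0' := club_club hd he hε0 hε hR1 hR hb0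
  subst hb0'
  have h2 := hR _ _ _ _ h hb0
  rw [tildeD_sn, tildeD_sn] at h2
  exact (key_arith2 k l (lt_trans h2 (by linarith))).symm

/-- for every (i,k) there is j with (i,k) R (j,k). -/
lemma exists_partner (hd : IsMetricOnNat d) (he : IsMetricOnNat e) (hε0 : 0 < ε) (hε : ε < 1/4)
    (hR1 : ∀ a, ∃ b, R a b)
    (hR : ∀ a a' b b', R a b → R a' b' → |tildeD d a a' - tildeD e b b'| < 2 * ε)
    (i : ℕ) (k : ℤ) : ∃ j, R (some (i,k)) (some (j,k)) := by
  obtain ⟨b, hb⟩ := hR1 (some (i,k))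
  rcases b with _ | q
  · exact absurd hb (fun h => some_none_false hd he hε0 hε hR1 hR h)
  · obtain ⟨j, l⟩ := q
    have := level_eq hd he hε0 hε hR1 hR hb
    subst this
    exact ⟨j, hb⟩

/-- same-level comparison. -/
lemma comp_same (he : IsMetricOnNat e)
    (hR : ∀ a a' b b', R a b → R a' b' → |tildeD d a a' - tildeD e b b'| < 2 * ε)
    {i i' j j' : ℕ} {k : ℤ} (h1 : R (some (i,k)) (some (j,k))) (h2 : R (some (i',k)) (some (j',k))) :
    |min 1 ((2:ℝ) ^ k * d i i') - min 1 ((2:ℝ) ^ k * e j j')| < 2 * ε := by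
  have := hR _ _ _ _ h1 h2
  rw [tildeD_ss, tildeD_ss, min_self, sub_self, abs_zero, zero_add, zero_add] at this
  exact this

/-- cross-level comparison with the same base point: e-partners are close. -/
lemma comp_cross (hd : IsMetricOnNat d) (he : IsMetricOnNat e) (hε1 : 2 * ε < 1)
    (hR : ∀ a a' b b', R a b → R a' b' → |tildeD d a a' - tildeD e b b'| < 2 * ε)
    {i j j' : ℕ} {k m : ℤ} (hkm : k ≤ m)
    (h1 : R (some (i,k)) (some (j,k))) (h2 : R (some (i,m)) (some (j',m))) :
    e j j' < 2 * ε * (2:ℝ) ^ (-k) := by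
  have h3 := hR _ _ _ _ h1 h2
  rw [tildeD_ss, tildeD_ss] at h3
  rw [min_eq_left hkm] at h3
  rw [(hd.1 i i).mpr rfl, mul_zero] at h3
  have hmin0 : min (1:ℝ) 0 = 0 := by norm_num
  rw [hmin0, add_zero] at h3
  have hM : (0:ℝ) ≤ min 1 ((2:ℝ)^k * e j j') :=
    le_min zero_le_one (mul_nonneg (zpow_nonneg (by norm_num) _) (he.nonneg j j'))
  rw [abs_sub_comm, add_sub_cancel_left, abs_of_nonneg hM] at h3
  have h6 : (2:ℝ) ^ k * e j j' < 2 * ε := by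
    rcases min_cases (1:ℝ) ((2:ℝ) ^ k * e j j') with ⟨hm, hle⟩ | ⟨hm, hlt⟩
    · rw [hm] at h3; linarith
    · rwa [hm] at h3
  have hk : (0:ℝ) < (2:ℝ) ^ k := zpow_pos (by norm_num) k
  have hkk : (0:ℝ) < (2:ℝ) ^ (-k) := zpow_pos (by norm_num) _
  have hkmul : (2:ℝ) ^ k * (2:ℝ) ^ (-k) = 1 := by
    rw [← zpow_add₀ (by norm_num : (2:ℝ) ≠ 0)]; simp
  calc e j j' = ((2:ℝ)^k * e j j') * (2:ℝ)^(-k) := by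
        rw [mul_comm ((2:ℝ)^k) (e j j'), mul_assoc, hkmul, mul_one]
    _ < 2 * ε * (2:ℝ)^(-k) := by exact mul_lt_mul_of_pos_right h6 hkk

end Corr

/-- Lipschitz extension from a dense sequence. -/
lemma extend_lemma {X Y : Type*} [MetricSpace X] [MetricSpace Y] [CompleteSpace Y]
    (u : ℕ → X) (hu : DenseRange u) (φ : ℕ → Y) (K : ℝ) (hK : 1 ≤ K)
    (h : ∀ i j, dist (φ i) (φ j) ≤ K * dist (u i) (u j)) :
    ∃ T : X → Y, (∀ i, T (u i) = φ i) ∧ (∀ x y, dist (T x) (T y) ≤ K * dist x y) := by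
  have hK0 : 0 < K := lt_of_lt_of_le one_pos hK
  have hc : ∀ x : X, ∀ n : ℕ, ∃ i, dist x (u i) < (1/2) ^ n := fun x n =>
    Metric.denseRange_iff.mp hu x _ (by positivity)
  choose c hcd using hc
  have hcauchy : ∀ x : X, CauchySeq (fun n => φ (c x n)) := by
    intro x
    apply cauchySeq_of_le_geometric (1/2) (3 * K) (by norm_num)
    intro n
    calc dist (φ (c x n)) (φ (c x (n+1))) ≤ K * dist (u (c x n)) (u (c x (n+1))) := h _ _
      _ ≤ K * (dist (u (c x n)) x + dist x (u (c x (n+1)))) := by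
          exact mul_le_mul_of_nonneg_left (dist_triangle _ _ _) (le_of_lt hK0)
      _ ≤ K * ((1/2)^n + (1/2)^(n+1)) := by
          apply mul_le_mul_of_nonneg_left _ (le_of_lt hK0)
          have h1 := hcd x n; have h2 := hcd x (n+1)
          rw [dist_comm (u (c x n)) x]; linarith
      _ ≤ 3 * K * (1/2)^n := by rw [pow_succ]; nlinarith [pow_pos (by norm_num : (0:ℝ) < 1/2) n]
  have hlim : ∀ x : X, ∃ y : Y, Filter.Tendsto (fun n => φ (c x n)) Filter.atTop (nhds y) :=
    fun x => cauchySeq_tendsto_of_complete (hcauchy x)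
  choose T hT using hlim
  have htendhalf : Filter.Tendsto (fun n : ℕ => ((1:ℝ)/2) ^ n) Filter.atTop (nhds 0) :=
    tendsto_pow_atTop_nhds_zero_of_lt_one (by norm_num) (by norm_num)
  have key : ∀ x y, dist (T x) (T y) ≤ K * dist x y := by
    intro x y
    have h1 : Filter.Tendsto (fun n => dist (φ (c x n)) (φ (c y n))) Filter.atTop
        (nhds (dist (T x) (T y))) := (hT x).dist (hT y)
    have h2 : Filter.Tendsto (fun n : ℕ => K * (dist x y + (1/2)^n + (1/2)^n)) Filter.atTop
        (nhds (K * (dist x y + 0 + 0))) := by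
      apply Filter.Tendsto.const_mul
      exact (tendsto_const_nhds.add htendhalf).add htendhalf
    rw [add_zero, add_zero] at h2
    refine le_of_tendsto_of_tendsto h1 h2 ?_
    filter_upwards with n
    calc dist (φ (c x n)) (φ (c y n)) ≤ K * dist (u (c x n)) (u (c y n)) := h _ _
      _ ≤ K * (dist x y + (1/2)^n + (1/2)^n) := by
          apply mul_le_mul_of_nonneg_left _ (le_of_lt hK0)
          have h3 := hcd x n; have h4 := hcd y n
          have := dist_triangle4 (u (c x n)) x y (u (c y n))
          rw [dist_comm (u (c x n)) x] at this
          rw [dist_comm y (u (c y n))] at h4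
          linarith [dist_comm y (u (c y n)) ▸ h4]
  have hval : ∀ i, T (u i) = φ i := by
    intro i
    have h1 : Filter.Tendsto (fun n => dist (φ (c (u i) n)) (φ i)) Filter.atTop
        (nhds (dist (T (u i)) (φ i))) := (hT (u i)).dist tendsto_const_nhds
    have h2 : Filter.Tendsto (fun n => dist (φ (c (u i) n)) (φ i)) Filter.atTop (nhds 0) := by
      apply squeeze_zero (fun n => dist_nonneg)
        (g := fun n : ℕ => K * (1/2)^n) ?_ ?_
      · intro n
        calc dist (φ (c (u i) n)) (φ i) ≤ K * dist (u (c (u i) n)) (u i) := h _ _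
          _ ≤ K * (1/2)^n := by
              apply mul_le_mul_of_nonneg_left _ (le_of_lt hK0)
              have := hcd (u i) n
              rw [dist_comm] at this
              exact le_of_lt this
      · simpa using htendhalf.const_mul K
    have := tendsto_nhds_unique h1 h2
    exact eq_of_dist_eq_zero this
  exact ⟨T, hval, key⟩

lemma two_zpow_neg_natCast (n : ℕ) : (2:ℝ) ^ (-(n:ℤ)) = (1/2) ^ n := by
  rw [zpow_neg, zpow_natCast, one_div, inv_pow]

lemma core_lemma (d e : ℕ → ℕ → ℝ) (hd : IsMetricOnNat d) (he : IsMetricOnNat e)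
    (Me : Type*) [MetricSpace Me] [CompleteSpace Me] (v : ℕ → Me)
    (hvd : ∀ i j, dist (v i) (v j) = e i j)
    (ε : ℝ) (hε0 : 0 < ε) (hε : ε < 1/4)
    (R : Option (ℕ × ℤ) → Option (ℕ × ℤ) → Prop)
    (hR1 : ∀ a, ∃ b, R a b)
    (hR : ∀ a a' b b', R a b → R a' b' → |tildeD d a a' - tildeD e b b'| < 2 * ε) :
    ∃ (φ : ℕ → Me) (f : ℤ → ℕ → ℕ),
      (∀ k i, R (some (i, k)) (some (f k i, k))) ∧
      (∀ k i, dist (φ i) (v (f k i)) ≤ 2 * ε * (2:ℝ) ^ (-k)) ∧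
      (∀ i i', dist (φ i) (φ i') ≤ (1 + 24 * ε) * d i i') := by
  have hε1 : 2 * ε < 1 := by linarith
  have hfex : ∀ (k : ℤ) (i : ℕ), ∃ j, R (some (i,k)) (some (j,k)) :=
    fun k i => exists_partner hd he hε0 hε hR1 hR i k
  choose f hf using hfex
  have hstep : ∀ (k m : ℤ), k ≤ m → ∀ i, e (f k i) (f m i) < 2 * ε * (2:ℝ) ^ (-k) :=
    fun k m hkm i => comp_cross hd he hε1 hR hkm (hf k i) (hf m i)
  -- Cauchy sequence for each i
  have hcauchy : ∀ i, CauchySeq (fun n : ℕ => v (f n i)) := by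
    intro i
    apply cauchySeq_of_le_geometric (1/2) (2*ε) (by norm_num)
    intro n
    rw [hvd]
    have := hstep n (n+1) (by exact_mod_cast Nat.le_succ n) i
    rw [two_zpow_neg_natCast] at this
    exact le_of_lt (by exact_mod_cast this)
  have hlim : ∀ i, ∃ y, Filter.Tendsto (fun n : ℕ => v (f n i)) Filter.atTop (nhds y) :=
    fun i => cauchySeq_tendsto_of_complete (hcauchy i)
  choose φ hφ using hlim
  refine ⟨φ, f, hf, ?_, ?_⟩
  · -- dist (φ i) (v (f k i)) ≤ 2ε 2^{-k}
    intro k i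
    have h1 : Filter.Tendsto (fun n : ℕ => dist (v (f n i)) (v (f k i))) Filter.atTop
        (nhds (dist (φ i) (v (f k i)))) := (hφ i).dist tendsto_const_nhds
    refine le_of_tendsto h1 ?_
    rw [Filter.eventually_atTop]
    refine ⟨k.toNat, fun n hn => ?_⟩
    have hkn : k ≤ (n : ℤ) :=
      le_trans (Int.self_le_toNat k) (by exact_mod_cast hn : (k.toNat : ℤ) ≤ n)
    rw [hvd, he.2.1]
    exact le_of_lt (hstep k n hkn i)
  · -- Lipschitz bound
    intro i i'
    rcases eq_or_lt_of_le (hd.nonneg i i') with hdz | hdpos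
    · have hii : i = i' := (hd.1 i i').mp hdz.symm
      subst hii
      rw [dist_self, (hd.1 i i).mpr rfl, mul_zero]
    set δ := d i i' with hδdef
    set k := Int.log 2 ((1 - 2*ε)/δ) with hkdef
    have hfrac : 0 < (1 - 2*ε)/δ := div_pos (by linarith) hdpos
    have h2k : (2:ℝ) ^ k ≤ (1 - 2*ε)/δ := by
      have := Int.zpow_log_le_self (b := 2) (by norm_num) hfrac
      exact_mod_cast this
    have h2k' : (1 - 2*ε)/δ < (2:ℝ) ^ (k + 1) := by
      have := Int.lt_zpow_succ_log_self (b := 2) (by norm_num) ((1 - 2*ε)/δ)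
      exact_mod_cast this
    have htpos : (0:ℝ) < (2:ℝ) ^ k := zpow_pos (by norm_num) _
    have htinvpos : (0:ℝ) < (2:ℝ) ^ (-k) := zpow_pos (by norm_num) _
    have htmul : (2:ℝ) ^ k * (2:ℝ) ^ (-k) = 1 := by
      rw [← zpow_add₀ (by norm_num : (2:ℝ) ≠ 0)]; simp
    have hkd : (2:ℝ) ^ k * δ ≤ 1 - 2*ε := by
      rw [← le_div_iff₀ hdpos]; exact h2k
    have hkd' : (2:ℝ) ^ (-k) < 4 * δ := by
      have h1 : (1 - 2*ε) < (2:ℝ) ^ (k+1) * δ := by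
        rw [← div_lt_iff₀ hdpos]; exact h2k'
      have h2 : (2:ℝ) ^ (k+1) = 2 * (2:ℝ) ^ k := by
        rw [zpow_add₀ (by norm_num : (2:ℝ) ≠ 0)]; ring
      rw [h2] at h1
      -- 1/2 ≤ 1 - 2ε < 2 * 2^k * δ  ⇒  2^{-k} < 4δ
      nlinarith [mul_lt_mul_of_pos_right h1 htinvpos, htmul, htinvpos, htpos]
    have hsame := comp_same he hR (hf k i) (hf k i')
    set E := e (f k i) (f k i') with hEdef
    have hmind : min 1 ((2:ℝ) ^ k * δ) = (2:ℝ) ^ k * δ := min_eq_right (by linarith)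
    rw [hmind, abs_lt] at hsame
    have hminE : min 1 ((2:ℝ) ^ k * E) < (2:ℝ) ^ k * δ + 2 * ε := by linarith [hsame.1]
    have hE : (2:ℝ) ^ k * E < (2:ℝ) ^ k * δ + 2 * ε := by
      rcases min_cases (1:ℝ) ((2:ℝ) ^ k * E) with ⟨hm, hle⟩ | ⟨hm, hlt⟩
      · rw [hm] at hminE; linarith
      · rwa [hm] at hminE
    have hE' : E < δ + 2 * ε * (2:ℝ) ^ (-k) := by
      nlinarith [mul_lt_mul_of_pos_right hE htinvpos, htmul, htinvpos]
    have hd1 : dist (φ i) (v (f k i)) ≤ 2 * ε * (2:ℝ) ^ (-k) := by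
      -- same as first bullet; reprove inline
      have h1 : Filter.Tendsto (fun n : ℕ => dist (v (f n i)) (v (f k i))) Filter.atTop
          (nhds (dist (φ i) (v (f k i)))) := (hφ i).dist tendsto_const_nhds
      refine le_of_tendsto h1 ?_
      rw [Filter.eventually_atTop]
      refine ⟨k.toNat, fun n hn => ?_⟩
      have hkn : k ≤ (n : ℤ) :=
        le_trans (Int.self_le_toNat k) (by exact_mod_cast hn : (k.toNat : ℤ) ≤ n)
      rw [hvd, he.2.1]
      exact le_of_lt (hstep k n hkn i)
    have hd2 : dist (φ i') (v (f k i')) ≤ 2 * ε * (2:ℝ) ^ (-k) := by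
      have h1 : Filter.Tendsto (fun n : ℕ => dist (v (f n i')) (v (f k i'))) Filter.atTop
          (nhds (dist (φ i') (v (f k i')))) := (hφ i').dist tendsto_const_nhds
      refine le_of_tendsto h1 ?_
      rw [Filter.eventually_atTop]
      refine ⟨k.toNat, fun n hn => ?_⟩
      have hkn : k ≤ (n : ℤ) :=
        le_trans (Int.self_le_toNat k) (by exact_mod_cast hn : (k.toNat : ℤ) ≤ n)
      rw [hvd, he.2.1]
      exact le_of_lt (hstep k n hkn i')
    have htri : dist (φ i) (φ i') ≤
        dist (φ i) (v (f k i)) + dist (v (f k i)) (v (f k i')) + dist (v (f k i')) (φ i') :=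
      dist_triangle4 _ _ _ _
    rw [hvd] at htri
    rw [dist_comm (v (f k i')) (φ i')] at htri
    -- combine:  ≤ 2εt + E + 2εt < δ + 6εt < δ + 24εδ
    nlinarith [htri, hE', hkd', hd1, hd2, hε0]

theorem stmt16 (d e : ℕ → ℕ → ℝ) (hd : IsMetricOnNat d) (he : IsMetricOnNat e)
    (Md Me : Type*) [MetricSpace Md] [CompleteSpace Md] [MetricSpace Me] [CompleteSpace Me]
    (u : ℕ → Md) (v : ℕ → Me) (hu : DenseRange u) (hv : DenseRange v)
    (hud : ∀ i j, dist (u i) (u j) = d i j) (hvd : ∀ i j, dist (v i) (v j) = e i j)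
    (ε : ℝ) (hε0 : 0 < ε) (hε : ε < 1 / 4)
    (R : Option (ℕ × ℤ) → Option (ℕ × ℤ) → Prop)
    (hR1 : ∀ a, ∃ b, R a b) (hR2 : ∀ b, ∃ a, R a b)
    (hR : ∀ a a' b b', R a b → R a' b' → |tildeD d a a' - tildeD e b b'| < 2 * ε) :
    ∃ T : Md → Me, Function.Bijective T ∧
      (∀ x y : Md, dist (T x) (T y) ≤ (1 + 24 * ε) * dist x y) ∧
      (∀ x y : Md, dist x y ≤ (1 + 24 * ε) * dist (T x) (T y)) := by
  have hε1 : 2 * ε < 1 := by linarith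
  obtain ⟨φ, f, hf, hφv, hφlip⟩ := core_lemma d e hd he Me v hvd ε hε0 hε R hR1 hR
  have hR1' : ∀ b, ∃ a, (fun b a => R a b) b a := hR2
  have hR'cmp : ∀ b b' a a', (fun b a => R a b) b a → (fun b a => R a b) b' a' →
      |tildeD e b b' - tildeD d a a'| < 2 * ε := by
    intro b b' a a' h1 h2
    rw [abs_sub_comm]
    exact hR a a' b b' h1 h2
  obtain ⟨ψ, g, hg, hψu, hψlip⟩ :=
    core_lemma e d he hd Md u hud ε hε0 hε (fun b a => R a b) hR1' hR'cmp
  set K := 1 + 24 * ε with hKdef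
  have hK : 1 ≤ K := by simp only [hKdef]; linarith
  have hK0 : 0 < K := lt_of_lt_of_le one_pos hK
  obtain ⟨T, hTu, hTlip⟩ := extend_lemma u hu φ K hK
    (fun i j => by rw [hud]; exact hφlip i j)
  obtain ⟨S, hSv, hSlip⟩ := extend_lemma v hv ψ K hK
    (fun i j => by rw [hvd]; exact hψlip i j)
  -- cross estimates
  have hcross1 : ∀ (k : ℤ) (i : ℕ), d (g k (f k i)) i < 2 * ε * (2:ℝ) ^ (-k) :=
    fun k i => comp_cross he hd hε1 hR'cmp (le_refl k) (hg k (f k i)) (hf k i)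
  have hcross2 : ∀ (k : ℤ) (j : ℕ), e j (f k (g k j)) < 2 * ε * (2:ℝ) ^ (-k) :=
    fun k j => comp_cross hd he hε1 hR (le_refl k) (hg k j) (hf k (g k j))
  have htendhalf : Filter.Tendsto (fun n : ℕ => ((1:ℝ)/2) ^ n) Filter.atTop (nhds 0) :=
    tendsto_pow_atTop_nhds_zero_of_lt_one (by norm_num) (by norm_num)
  -- S ∘ T = id on the dense set
  have hSTu : ∀ i, S (T (u i)) = u i := by
    intro i
    rw [hTu i]
    have hbound : ∀ n : ℕ, dist (S (φ i)) (u i) ≤ (K * 2 + 4) * ε * (1/2) ^ n := by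
      intro n
      have e1 : dist (S (φ i)) (S (v (f n i))) ≤ K * (2 * ε * (2:ℝ) ^ (-(n:ℤ))) :=
        le_trans (hSlip _ _) (mul_le_mul_of_nonneg_left (hφv n i) (le_of_lt hK0))
      have e2 : dist (S (v (f n i))) (u (g n (f n i))) ≤ 2 * ε * (2:ℝ) ^ (-(n:ℤ)) := by
        rw [hSv (f n i)]
        exact hψu n (f n i)
      have e3 : dist (u (g n (f n i))) (u i) ≤ 2 * ε * (2:ℝ) ^ (-(n:ℤ)) := by
        rw [hud]
        exact le_of_lt (hcross1 n i)
      have htri := dist_triangle4 (S (φ i)) (S (v (f n i))) (u (g n (f n i))) (u i)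
      rw [two_zpow_neg_natCast] at e1 e2 e3
      have hp : (0:ℝ) ≤ (1/2:ℝ) ^ n := by positivity
      nlinarith [htri, e1, e2, e3]
    have hlim0 : Filter.Tendsto (fun n : ℕ => (K * 2 + 4) * ε * (1/2) ^ n) Filter.atTop
        (nhds 0) := by simpa using htendhalf.const_mul ((K * 2 + 4) * ε)
    have hle0 : dist (S (φ i)) (u i) ≤ 0 :=
      le_of_tendsto_of_tendsto tendsto_const_nhds hlim0
        (Filter.Eventually.of_forall hbound)
    exact eq_of_dist_eq_zero (le_antisymm hle0 dist_nonneg)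
  -- T ∘ S = id on the dense set
  have hTSv : ∀ j, T (S (v j)) = v j := by
    intro j
    rw [hSv j]
    have hbound : ∀ n : ℕ, dist (T (ψ j)) (v j) ≤ (K * 2 + 4) * ε * (1/2) ^ n := by
      intro n
      have e1 : dist (T (ψ j)) (T (u (g n j))) ≤ K * (2 * ε * (2:ℝ) ^ (-(n:ℤ))) :=
        le_trans (hTlip _ _) (mul_le_mul_of_nonneg_left (hψu n j) (le_of_lt hK0))
      have e2 : dist (T (u (g n j))) (v (f n (g n j))) ≤ 2 * ε * (2:ℝ) ^ (-(n:ℤ)) := by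
        rw [hTu (g n j)]
        exact hφv n (g n j)
      have e3 : dist (v (f n (g n j))) (v j) ≤ 2 * ε * (2:ℝ) ^ (-(n:ℤ)) := by
        rw [hvd, he.2.1]
        exact le_of_lt (hcross2 n j)
      have htri := dist_triangle4 (T (ψ j)) (T (u (g n j))) (v (f n (g n j))) (v j)
      rw [two_zpow_neg_natCast] at e1 e2 e3
      have hp : (0:ℝ) ≤ (1/2:ℝ) ^ n := by positivity
      nlinarith [htri, e1, e2, e3]
    have hlim0 : Filter.Tendsto (fun n : ℕ => (K * 2 + 4) * ε * (1/2) ^ n) Filter.atTop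
        (nhds 0) := by simpa using htendhalf.const_mul ((K * 2 + 4) * ε)
    have hle0 : dist (T (ψ j)) (v j) ≤ 0 :=
      le_of_tendsto_of_tendsto tendsto_const_nhds hlim0
        (Filter.Eventually.of_forall hbound)
    exact eq_of_dist_eq_zero (le_antisymm hle0 dist_nonneg)
  -- extend the identities to everything by density
  have hST : ∀ x, S (T x) = x := by
    intro x
    have hle0 : dist (S (T x)) x ≤ 0 := by
      apply le_of_forall_pos_le_add
      intro δ hδ
      have hKK : (0:ℝ) < K * K + 1 := by nlinarith
      obtain ⟨i, hi⟩ := Metric.denseRange_iff.mp hu x (δ / (K * K + 1)) (by positivity)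
      have e1 : dist (S (T x)) (S (T (u i))) ≤ K * (K * dist x (u i)) :=
        le_trans (hSlip _ _) (mul_le_mul_of_nonneg_left (hTlip x (u i)) (le_of_lt hK0))
      have e2 : dist (S (T (u i))) x = dist x (u i) := by
        rw [hSTu i, dist_comm]
      have htri := dist_triangle (S (T x)) (S (T (u i))) x
      rw [e2] at htri
      have : (K * K + 1) * dist x (u i) < δ := by
        rw [← lt_div_iff₀' hKK]
        exact hi
      nlinarith [htri, e1]
    exact eq_of_dist_eq_zero (le_antisymm hle0 dist_nonneg)
  have hTS : ∀ y, T (S y) = y := by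
    intro y
    have hle0 : dist (T (S y)) y ≤ 0 := by
      apply le_of_forall_pos_le_add
      intro δ hδ
      have hKK : (0:ℝ) < K * K + 1 := by nlinarith
      obtain ⟨j, hj⟩ := Metric.denseRange_iff.mp hv y (δ / (K * K + 1)) (by positivity)
      have e1 : dist (T (S y)) (T (S (v j))) ≤ K * (K * dist y (v j)) :=
        le_trans (hTlip _ _) (mul_le_mul_of_nonneg_left (hSlip y (v j)) (le_of_lt hK0))
      have e2 : dist (T (S (v j))) y = dist y (v j) := by
        rw [hTSv j, dist_comm]
      have htri := dist_triangle (T (S y)) (T (S (v j))) y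
      rw [e2] at htri
      have : (K * K + 1) * dist y (v j) < δ := by
        rw [← lt_div_iff₀' hKK]
        exact hj
      nlinarith [htri, e1]
    exact eq_of_dist_eq_zero (le_antisymm hle0 dist_nonneg)
  refine ⟨T, Function.bijective_iff_has_inverse.mpr ⟨S, hST, hTS⟩, hTlip, ?_⟩
  intro x y
  calc dist x y = dist (S (T x)) (S (T y)) := by rw [hST x, hST y]
    _ ≤ (1 + 24 * ε) * dist (T x) (T y) := hSlip _ _
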